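/- Let R be a w-Noetherian commutative ring and let E be a GV-torsion-free injective R-module (i.e., a w-injective w-module). Then E is w-faithfully injective (equivalently, Hom_R(R/m, E) ≠ 0 for every m ∈ w-Max(R)) if and only if for every m ∈ w-Max(R) the localization E_m is a faithfully injective R_m-module, i.e., E_m is an injective R_m-module and Hom_{R_m}(N, E_m) ≠ 0 for every nonzero R_m-module N. -/

import Mathlib

universe u v

section WDefs

variable (R : Type u) [CommRing R]

/-- The canonical `R`-linear map `R → Hom_R(J, R)`, `r ↦ (j ↦ r * j)`. -/
def gvCanonicalMap (J : Ideal R) : R →ₗ[R] (J →ₗ[R] R) where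
  toFun r := r • (J.subtype)
  map_add' x y := add_smul x y _
  map_smul' r x := by simp [mul_smul]

/-- A finitely generated ideal `J` of `R` is a GV-ideal (Glaz–Vasconcelos ideal)
if the canonical map `R → Hom_R(J, R)` is an isomorphism. -/
def IsGVIdeal (J : Ideal R) : Prop :=
  J.FG ∧ Function.Bijective (gvCanonicalMap R J)

/-- An ideal `I` of `R` is a w-ideal if whenever `J x ⊆ I` for some GV-ideal `J`,
then `x ∈ I`. -/
def IsWIdeal (I : Ideal R) : Prop :=
  ∀ x : R, (∃ J : Ideal R, IsGVIdeal R J ∧ ∀ j ∈ J, j * x ∈ I) → x ∈ I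

/-- `m` is a maximal w-ideal: maximal among the proper w-ideals of `R`. -/
def IsMaxWIdeal (m : Ideal R) : Prop :=
  IsWIdeal R m ∧ m ≠ ⊤ ∧ ∀ I : Ideal R, IsWIdeal R I → I ≠ ⊤ → m ≤ I → I = m

variable {M : Type v} [AddCommGroup M] [Module R M]

/-- `x` is a GV-torsion element if it is killed by some GV-ideal. -/
def IsGVTorsionElem (x : M) : Prop :=
  ∃ J : Ideal R, IsGVIdeal R J ∧ ∀ j ∈ J, j • x = 0

variable (M)

/-- `M` is GV-torsion-free if it has no nonzero GV-torsion element. -/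
def IsGVTorsionFree : Prop := ∀ x : M, IsGVTorsionElem R x → x = 0

/-- `M` is GV-torsion if all its elements are GV-torsion. -/
def IsGVTorsion : Prop := ∀ x : M, IsGVTorsionElem R x

/-- `M` is a w-module: GV-torsion-free and every map from a GV-ideal to `M`
extends to `R`. -/
def IsWModule : Prop :=
  IsGVTorsionFree R M ∧
    ∀ J : Ideal R, IsGVIdeal R J → ∀ f : J →ₗ[R] M,
      ∃ g : R →ₗ[R] M, ∀ x : J, g (x : R) = f x

end WDefs

/-- `R` is w-Noetherian: every ascending chain of w-ideals of `R` stabilizes. -/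
def IsWNoetherianRing (R : Type u) [CommRing R] : Prop :=
  ∀ f : ℕ →o Ideal R, (∀ n, IsWIdeal R (f n)) → ∃ n, ∀ k, n ≤ k → f k = f n

/-!
The w-Noetherian hypothesis enters through a single stabilization: for `x ∈ E` and a
multiplicative set `S`, the annihilators of the multiples `u • x` (`u ∈ S`) are w-ideals because
`E` is GV-torsion-free, so one of them, `Ann (u₀ • x)`, is maximal, and then
`Ann (u • u₀ • x) = Ann (u₀ • x)` for all `u ∈ S`. This makes `E → S⁻¹E` surjective (an injective
module is divisible by `a` at `w` as soon as `Ann a ⊆ Ann w`) and makes its kernel, the `S`-torsion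
of `E`, a direct summand. So `S⁻¹E` is an `R`-linear retract of `E`, hence injective over `R` and
over `S⁻¹R`.

For a maximal w-ideal `m`, a nonzero `x ∈ E` with `m • x = 0` has `Ann x = m` (a proper w-ideal
containing `m`), so `x / 1 ≠ 0` is killed by the maximal ideal of `R_m`; over a local ring, an
injective module containing such an element receives a nonzero map from every nonzero module.
Conversely, the retraction `E_m → E` carries a nonzero element of `E_m` killed by `m` to one of `E`.
-/

section InjectiveModules

variable {R : Type u} [CommRing R] {E : Type u} [AddCommGroup E] [Module R E]

theorem exists_maximal_disjoint {α : Type*} [CompleteLattice α] [IsCompactlyGenerated α] (a : α) :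
    ∃ c, Maximal (Disjoint · a) c :=
  zorn_le₀ _ fun _ hcs hchain =>
    ⟨_, hchain.directedOn.disjoint_sSup_left.mpr hcs, fun _ => le_sSup⟩

theorem Module.Injective.exists_smul_eq_of_torsionOf_le [Module.Injective R E] {a : R} {w : E}
    (h : Ideal.torsionOf R R a ≤ Ideal.torsionOf R E w) : ∃ y : E, a • y = w := by
  obtain ⟨g, hg⟩ := Module.Injective.extension_property R E (R ⧸ Ideal.torsionOf R R a) R
    (Submodule.liftQ _ (LinearMap.toSpanSingleton R R a) le_rfl)
    (LinearMap.ker_eq_bot.mp (Submodule.ker_liftQ_eq_bot' _ _ rfl))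
    (Submodule.liftQ _ (LinearMap.toSpanSingleton R E w) h)
  have hga : g ((1 : R) • a) = (1 : R) • w := LinearMap.congr_fun hg (Submodule.Quotient.mk 1)
  exact ⟨g 1, by rw [← map_smul, smul_eq_mul, mul_one]; simpa using hga⟩

theorem Module.Injective.exists_endomorphism_eq_self_on_and_eq_zero_of_disjoint
    [Module.Injective R E] (Z : Submodule R E) :
    ∃ τ : E →ₗ[R] E, (∀ z ∈ Z, τ z = z) ∧ ∀ w, Disjoint (R ∙ τ w) Z → τ w = 0 := by
  obtain ⟨C, hCZ, hCmax⟩ := exists_maximal_disjoint Z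
  have hinj : Function.Injective (C.mkQ ∘ₗ Z.subtype) := by
    rw [← LinearMap.ker_eq_bot, LinearMap.ker_comp, Submodule.ker_mkQ]
    exact Submodule.disjoint_iff_comap_eq_bot.mp hCZ.symm
  obtain ⟨σ, hσ⟩ := Module.Injective.extension_property R E Z (E ⧸ C) _ hinj Z.subtype
  have hσZ (z : E) (hz : z ∈ Z) : σ (C.mkQ z) = z := LinearMap.congr_fun hσ ⟨z, hz⟩
  refine ⟨σ ∘ₗ C.mkQ, hσZ, fun w hw => ?_⟩
  suffices w ∈ C by simp [(Submodule.Quotient.mk_eq_zero C).mpr this]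
  by_contra hwC
  -- By maximality `C ⊔ R ∙ w` meets `Z`, and `σ ∘ mkQ` maps that intersection into `R ∙ σ (mkQ w)`.
  have hmeet : ¬Disjoint (C ⊔ R ∙ w) Z := fun hd =>
    hwC (hCmax hd le_sup_left (Submodule.mem_sup_right (Submodule.mem_span_singleton_self w)))
  obtain ⟨z, hz, hzZ, hz0⟩ : ∃ z ∈ C ⊔ R ∙ w, z ∈ Z ∧ z ≠ 0 := by
    simpa [Submodule.disjoint_def] using hmeet
  obtain ⟨c, hc, _, hy, rfl⟩ := Submodule.mem_sup.mp hz
  obtain ⟨r, rfl⟩ := Submodule.mem_span_singleton.mp hy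
  have hσz : σ (C.mkQ (c + r • w)) = r • σ (C.mkQ w) := by
    simp [(Submodule.Quotient.mk_eq_zero C).mpr hc]
  refine hz0 (Submodule.disjoint_def.mp hw _ ?_ hzZ)
  exact Submodule.mem_span_singleton.mpr ⟨r, by rw [LinearMap.comp_apply, ← hσz, hσZ _ hzZ]⟩

end InjectiveModules

section Retracts

variable {R : Type u} [CommRing R] {E F : Type u} [AddCommGroup E] [Module R E]
  [AddCommGroup F] [Module R F]

theorem Module.Injective.of_comp_eq_id [Module.Injective R E] (c : E →ₗ[R] F) (s : F →ₗ[R] E)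
    (hcs : c ∘ₗ s = LinearMap.id) : Module.Injective R F :=
  ⟨fun _ _ _ _ _ _ f hf g => by
    obtain ⟨h, hh⟩ := Module.Injective.out f hf (s ∘ₗ g)
    exact ⟨c ∘ₗ h, fun x => by simp [hh, ← LinearMap.comp_apply c s, hcs]⟩⟩

theorem LinearMap.exists_comp_eq_id_of_retraction_ker (c : E →ₗ[R] F)
    (hc : Function.Surjective c) (τ : E →ₗ[R] LinearMap.ker c)
    (hτ : ∀ z : LinearMap.ker c, τ z = z) :
    ∃ s : F →ₗ[R] E, c ∘ₗ s = LinearMap.id := by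
  let e := Submodule.quotientEquivOfIsCompl _ _ (LinearMap.isCompl_of_proj hτ)
  refine ⟨(LinearMap.ker τ).subtype ∘ₗ e.toLinearMap ∘ₗ
    (c.quotKerEquivOfSurjective hc).symm.toLinearMap, LinearMap.ext fun ξ => ?_⟩
  have hξ := (c.quotKerEquivOfSurjective hc).apply_symm_apply ξ
  rw [← e.symm_apply_apply ((c.quotKerEquivOfSurjective hc).symm ξ),
    Submodule.quotientEquivOfIsCompl_symm_apply] at hξ
  simpa using hξ

theorem Module.Injective.of_isLocalization (S : Submonoid R) (A : Type u) [CommRing A]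
    [Algebra R A] [IsLocalization S A] [Module A F] [IsScalarTower R A F]
    [Module.Injective R F] : Module.Injective A F := by
  constructor
  intro X Y _ _ _ _ f hf g
  let _ : Module R X := Module.compHom X (algebraMap R A)
  let _ : Module R Y := Module.compHom Y (algebraMap R A)
  have : IsScalarTower R A X := IsScalarTower.of_algebraMap_smul fun _ _ => rfl
  have : IsScalarTower R A Y := IsScalarTower.of_algebraMap_smul fun _ _ => rfl
  obtain ⟨h, hh⟩ := Module.Injective.out (f.restrictScalars R) hf (g.restrictScalars R)
  exact ⟨h.extendScalarsOfIsLocalization S A, hh⟩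

end Retracts

section LocalRing

variable {R : Type u} [CommRing R] {M : Type u} {N : Type*} [AddCommGroup M] [Module R M]
  [AddCommGroup N] [Module R N]

theorem Ideal.torsionOf_le_torsionOf_apply (f : M →ₗ[R] N) (x : M) :
    Ideal.torsionOf R M x ≤ Ideal.torsionOf R N (f x) := fun r hr => by
  rw [Ideal.mem_torsionOf_iff] at hr ⊢
  rw [← map_smul, hr, map_zero]

theorem exists_linearMap_quotient_ne_zero_iff {I : Ideal R} :
    (∃ f : (R ⧸ I) →ₗ[R] M, f ≠ 0) ↔ ∃ x : M, x ≠ 0 ∧ I ≤ Ideal.torsionOf R M x := by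
  constructor
  · rintro ⟨f, hf⟩
    have hf1 : (f ∘ₗ I.mkQ) 1 ≠ 0 := fun h =>
      hf (Submodule.linearMap_qext _
        (LinearMap.ext_ring (by rw [h, LinearMap.zero_comp, LinearMap.zero_apply])))
    refine ⟨_, hf1, fun a ha => ?_⟩
    rw [Ideal.mem_torsionOf_iff, ← map_smul, smul_eq_mul, mul_one, LinearMap.comp_apply,
      Submodule.mkQ_apply, (Submodule.Quotient.mk_eq_zero I).mpr ha, map_zero]
  · rintro ⟨x, hx, hIx⟩
    refine ⟨I.liftQ (LinearMap.toSpanSingleton R M x) hIx, fun h => hx ?_⟩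
    have h1 : (1 : R) • x = 0 := LinearMap.congr_fun h (Submodule.Quotient.mk 1)
    rwa [one_smul] at h1

theorem IsLocalRing.exists_linearMap_ne_zero_of_maximalIdeal_le_torsionOf [IsLocalRing R]
    [Module.Injective R M] {ξ : M} (hξ : ξ ≠ 0)
    (hξm : IsLocalRing.maximalIdeal R ≤ Ideal.torsionOf R M ξ) [Nontrivial N] :
    ∃ f : N →ₗ[R] M, f ≠ 0 := by
  obtain ⟨x, hx⟩ := exists_ne (0 : N)
  have hxm : Ideal.torsionOf R N x ≤ IsLocalRing.maximalIdeal R :=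
    IsLocalRing.le_maximalIdeal (by rwa [Ne, Ideal.torsionOf_eq_top_iff])
  let g := (Submodule.liftQ _ (LinearMap.toSpanSingleton R M ξ) (hxm.trans hξm)) ∘ₗ
    (Ideal.quotTorsionOfEquivSpanSingleton R N x).symm.toLinearMap
  obtain ⟨f, hf⟩ := Module.Injective.extension_property R M _ N (R ∙ x).subtype
    (Submodule.injective_subtype _) g
  have hsymm : (Ideal.quotTorsionOfEquivSpanSingleton R N x).symm
      ⟨x, Submodule.mem_span_singleton_self x⟩ = Submodule.Quotient.mk 1 := by
    rw [LinearEquiv.symm_apply_eq, Ideal.quotTorsionOfEquivSpanSingleton_apply_mk, one_smul]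
  have hfx : f x = (1 : R) • ξ := by
    have := LinearMap.congr_fun hf ⟨x, Submodule.mem_span_singleton_self x⟩
    simp only [LinearMap.comp_apply, Submodule.subtype_apply, g, LinearEquiv.coe_coe,
      hsymm] at this
    exact this
  refine ⟨f, fun h => hξ ?_⟩
  rw [h, LinearMap.zero_apply, one_smul] at hfx
  exact hfx.symm

end LocalRing

section AtPrime

variable {R : Type u} [CommRing R] {M : Type u} [AddCommGroup M] [Module R M] (p : Ideal R)
  [p.IsPrime]

theorem LocalizedModule.maximalIdeal_le_torsionOf_iff (ξ : LocalizedModule p.primeCompl M) :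
    IsLocalRing.maximalIdeal (Localization.AtPrime p) ≤ Ideal.torsionOf _ _ ξ ↔
      p ≤ Ideal.torsionOf R _ ξ := by
  rw [← Localization.AtPrime.map_eq_maximalIdeal, Ideal.map_le_iff_le_comap]
  refine Iff.of_eq (congrArg (p ≤ ·) (Ideal.ext fun r => ?_))
  simp [Ideal.mem_torsionOf_iff, algebraMap_smul]

theorem LocalizedModule.mkLinearMap_ne_zero_of_torsionOf_le {x : M}
    (hx : Ideal.torsionOf R M x ≤ p) : LocalizedModule.mkLinearMap p.primeCompl M x ≠ 0 :=
  fun h => by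
    obtain ⟨u, hu, hux⟩ := LocalizedModule.mem_ker_mkLinearMap_iff.mp h
    exact hu (hx hux)

end AtPrime

section WNoetherian

variable {R : Type u} [CommRing R]

theorem IsWNoetherianRing.wellFoundedGT (hRN : IsWNoetherianRing R) :
    WellFoundedGT {I : Ideal R // IsWIdeal R I} := by
  rw [wellFoundedGT_iff_monotone_chain_condition]
  intro f
  obtain ⟨n, hn⟩ := hRN ((OrderHom.Subtype.val _).comp f) fun n => (f n).2
  exact ⟨n, fun k hk => Subtype.ext (hn k hk).symm⟩

theorem IsWIdeal.colon_span_singleton {I : Ideal R} (hI : IsWIdeal R I) (a : R) :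
    IsWIdeal R (I.colon (Ideal.span {a})) := by
  rintro x ⟨J, hJ, hJx⟩
  rw [Ideal.mem_colon_span_singleton]
  refine hI (x * a) ⟨J, hJ, fun j hj => ?_⟩
  rw [← mul_assoc, ← Ideal.mem_colon_span_singleton]
  exact hJx j hj

theorem IsMaxWIdeal.isPrime {m : Ideal R} (hm : IsMaxWIdeal R m) : m.IsPrime := by
  refine ⟨hm.2.1, fun {a b} hab => or_iff_not_imp_left.mpr fun ha => ?_⟩
  have hcolon : m.colon (Ideal.span {a}) ≠ ⊤ := by
    rw [Ne, Ideal.eq_top_iff_one, Ideal.mem_colon_span_singleton, one_mul]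
    exact ha
  have hle : m ≤ m.colon (Ideal.span {a}) := fun r hr =>
    Ideal.mem_colon_span_singleton.mpr (m.mul_mem_right a hr)
  rw [← hm.2.2 _ (hm.1.colon_span_singleton a) hcolon hle, Ideal.mem_colon_span_singleton,
    mul_comm]
  exact hab

variable {E : Type u} [AddCommGroup E] [Module R E]

theorem isWIdeal_torsionOf (htf : IsGVTorsionFree R E) (x : E) :
    IsWIdeal R (Ideal.torsionOf R E x) := by
  rintro r ⟨J, hJ, hJr⟩
  refine htf (r • x) ⟨J, hJ, fun j hj => ?_⟩
  rw [smul_smul]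
  exact hJr j hj

theorem IsWNoetherianRing.exists_torsionOf_smul_eq (hRN : IsWNoetherianRing R)
    (htf : IsGVTorsionFree R E) (S : Submonoid R) (x : E) :
    ∃ u₀ ∈ S, ∀ u ∈ S, Ideal.torsionOf R E (u • u₀ • x) = Ideal.torsionOf R E (u₀ • x) := by
  have := hRN.wellFoundedGT
  let t : S → {I : Ideal R // IsWIdeal R I} := fun u =>
    ⟨Ideal.torsionOf R E ((u : R) • x), isWIdeal_torsionOf htf _⟩
  obtain ⟨_, ⟨⟨u₀, hu₀⟩, rfl⟩, hmax⟩ :=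
    wellFounded_gt.has_min (Set.range t) (Set.range_nonempty t)
  refine ⟨u₀, hu₀, fun u hu => ?_⟩
  have hle : Ideal.torsionOf R E (u₀ • x) ≤ Ideal.torsionOf R E (u • u₀ • x) := fun r hr => by
    rw [Ideal.mem_torsionOf_iff] at hr ⊢
    rw [smul_comm, hr, smul_zero]
  refine (hle.lt_or_eq.resolve_left fun hlt => hmax (t (⟨u, hu⟩ * ⟨u₀, hu₀⟩)) ⟨_, rfl⟩ ?_).symm
  simpa [t, mul_smul] using hlt

end WNoetherian

namespace IsWNoetherianRing

variable {R : Type u} [CommRing R] (hRN : IsWNoetherianRing R) {E : Type u} [AddCommGroup E]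
  [Module R E] (htf : IsGVTorsionFree R E) (S : Submonoid R)
include hRN htf

theorem mkLinearMap_surjective [Module.Injective R E] :
    Function.Surjective (LocalizedModule.mkLinearMap S E) := by
  intro ξ
  induction ξ using LocalizedModule.induction_on with
  | h x s =>
  obtain ⟨u₀, hu₀, hstab⟩ := hRN.exists_torsionOf_smul_eq htf S x
  obtain ⟨y, hy⟩ := Module.Injective.exists_smul_eq_of_torsionOf_le (a := (s : R) * u₀)
    (w := u₀ • x) fun r hr => by
      have hr' : (r * ((s : R) * u₀)) • x = 0 := by
        rw [← smul_eq_mul, (Ideal.mem_torsionOf_iff _ _).mp hr, zero_smul]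
      rwa [← hstab s s.2, Ideal.mem_torsionOf_iff, smul_smul, smul_smul, mul_assoc]
  refine ⟨y, LocalizedModule.mk_eq.mpr ⟨⟨u₀, hu₀⟩, ?_⟩⟩
  simp [Submonoid.smul_def, smul_smul, mul_comm u₀, ← hy]

theorem exists_smul_disjoint_ker_mkLinearMap (y : E) :
    ∃ u ∈ S, Disjoint (R ∙ (u • y)) (LinearMap.ker (LocalizedModule.mkLinearMap S E)) := by
  obtain ⟨u₀, hu₀, hstab⟩ := hRN.exists_torsionOf_smul_eq htf S y
  refine ⟨u₀, hu₀, Submodule.disjoint_def.mpr fun z hz hzS => ?_⟩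
  obtain ⟨r, rfl⟩ := Submodule.mem_span_singleton.mp hz
  obtain ⟨v, hv, hvr⟩ := LocalizedModule.mem_ker_mkLinearMap_iff.mp hzS
  rw [← Ideal.mem_torsionOf_iff, ← hstab v hv, Ideal.mem_torsionOf_iff, smul_comm]
  exact hvr

theorem exists_retraction_ker_mkLinearMap [Module.Injective R E] :
    ∃ τ : E →ₗ[R] LinearMap.ker (LocalizedModule.mkLinearMap S E),
      ∀ z : LinearMap.ker (LocalizedModule.mkLinearMap S E), τ z = z := by
  obtain ⟨τ, hτZ, hτ⟩ := Module.Injective.exists_endomorphism_eq_self_on_and_eq_zero_of_disjoint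
    (LinearMap.ker (LocalizedModule.mkLinearMap S E))
  have hrange (x : E) : τ x ∈ LinearMap.ker (LocalizedModule.mkLinearMap S E) := by
    obtain ⟨u, hu, hdisj⟩ := hRN.exists_smul_disjoint_ker_mkLinearMap htf S (τ x)
    rw [← map_smul] at hdisj
    exact LocalizedModule.mem_ker_mkLinearMap_iff.mpr ⟨u, hu, by rw [← map_smul, hτ _ hdisj]⟩
  exact ⟨τ.codRestrict _ hrange, fun z => Subtype.ext (hτZ z z.2)⟩

theorem exists_comp_mkLinearMap_eq_id [Module.Injective R E] :
    ∃ s : LocalizedModule S E →ₗ[R] E, LocalizedModule.mkLinearMap S E ∘ₗ s = LinearMap.id :=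
  have ⟨τ, hτ⟩ := hRN.exists_retraction_ker_mkLinearMap htf S
  LinearMap.exists_comp_eq_id_of_retraction_ker _ (hRN.mkLinearMap_surjective htf S) τ hτ

theorem injective_localizedModule [Module.Injective R E] :
    Module.Injective (Localization S) (LocalizedModule S E) :=
  have ⟨s, hs⟩ := hRN.exists_comp_mkLinearMap_eq_id htf S
  have := Module.Injective.of_comp_eq_id _ s hs
  Module.Injective.of_isLocalization S (Localization S)

end IsWNoetherianRing

/-- w-analogue of Ishikawa's Proposition 3.5: over a w-Noetherian ring,
a GV-torsion-free injective module `E` is w-faithfully injective iff for every maximal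
w-ideal `m` the localization `E_m` is a faithfully injective `R_m`-module. -/
theorem wFaithfullyInjective_iff_localizations_faithfullyInjective (R : Type u)
    [CommRing R] (hRN : IsWNoetherianRing R) (E : Type u) [AddCommGroup E] [Module R E]
    (htf : IsGVTorsionFree R E) (hinj : Module.Injective R E) :
    (∀ m : Ideal R, IsMaxWIdeal R m → ∃ f : (R ⧸ m) →ₗ[R] E, f ≠ 0) ↔
      ∀ (m : Ideal R), IsMaxWIdeal R m → ∀ [hp : m.IsPrime],
        Module.Injective (Localization.AtPrime m) (LocalizedModule m.primeCompl E) ∧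
          ∀ (N : Type u) [AddCommGroup N] [Module (Localization.AtPrime m) N],
            Nontrivial N →
              ∃ f : N →ₗ[Localization.AtPrime m] LocalizedModule m.primeCompl E,
                f ≠ 0 := by
  have := hinj
  constructor
  · intro hw m hm _
    have hinjm := hRN.injective_localizedModule htf m.primeCompl
    refine ⟨hinjm, fun N _ _ _ => ?_⟩
    obtain ⟨x, hx, hmx⟩ := exists_linearMap_quotient_ne_zero_iff.mp (hw m hm)
    have hxm : Ideal.torsionOf R E x = m :=
      hm.2.2 _ (isWIdeal_torsionOf htf x) (by rwa [Ne, Ideal.torsionOf_eq_top_iff]) hmx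
    exact IsLocalRing.exists_linearMap_ne_zero_of_maximalIdeal_le_torsionOf
      (LocalizedModule.mkLinearMap_ne_zero_of_torsionOf_le m hxm.le)
      ((LocalizedModule.maximalIdeal_le_torsionOf_iff m _).mpr
        (hmx.trans (Ideal.torsionOf_le_torsionOf_apply _ x)))
  · intro hloc m hm
    have := hm.isPrime
    obtain ⟨ξ, hξ, hξm⟩ := exists_linearMap_quotient_ne_zero_iff.mp
      ((hloc m hm).2 (_ ⧸ IsLocalRing.maximalIdeal (Localization.AtPrime m)) inferInstance)
    obtain ⟨s, hs⟩ := hRN.exists_comp_mkLinearMap_eq_id htf m.primeCompl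
    refine exists_linearMap_quotient_ne_zero_iff.mpr ⟨s ξ, fun h => hξ ?_,
      ((LocalizedModule.maximalIdeal_le_torsionOf_iff m ξ).mp hξm).trans
        (Ideal.torsionOf_le_torsionOf_apply s ξ)⟩
    simpa [h] using (LinearMap.congr_fun hs ξ).symm
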